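/- arXiv:1112.0711 — 6 statements merged into one kernel-verified Lean document; each statement's English description precedes it below -/
import Mathlib

section
/- Let r_0 > 1 and define r_i = 1 + ln(r_{i-1}) for i ≥ 1. Then there is a constant c > 0 such that for all sufficiently large n, r_n ≤ 1 + c/n. -/
/-!
Write `d n = r n - 1`, so `d (n + 1) = log (1 + d n)`. From `t ≤ sinh t` at `t = log y` one gets
`log y ≤ (y - y⁻¹) / 2` for `y ≥ 1`, which at `y = 1 + x` says that each step raises `d⁻¹` by at
least `(d + 2)⁻¹`. As `d` is positive and decreasing, the increments are at least `(d 0 + 2)⁻¹`,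
so `(d n)⁻¹ ≥ n / (d 0 + 2)`, i.e. `r n ≤ 1 + (r 0 + 1) / n`.
-/

open Real

theorem Real.log_le_sub_inv_div_two {y : ℝ} (hy : 1 ≤ y) : log y ≤ (y - y⁻¹) / 2 := by
  have hy0 : 0 < y := by linarith
  calc log y ≤ sinh (log y) := self_le_sinh_iff.mpr (log_nonneg hy)
    _ = (y - y⁻¹) / 2 := by rw [sinh_eq, exp_neg, exp_log hy0]

theorem Real.inv_add_inv_add_two_le_inv_log_one_add {x : ℝ} (hx : 0 < x) :
    x⁻¹ + (x + 2)⁻¹ ≤ (log (1 + x))⁻¹ := by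
  have hlog : 0 < log (1 + x) := log_pos (by linarith)
  have hbound : log (1 + x) ≤ x * (x + 2) / (2 * (x + 1)) := by
    calc log (1 + x) ≤ ((1 + x) - (1 + x)⁻¹) / 2 := log_le_sub_inv_div_two (by linarith)
      _ = x * (x + 2) / (2 * (x + 1)) := by field_simp; ring
  calc x⁻¹ + (x + 2)⁻¹ = (x * (x + 2) / (2 * (x + 1)))⁻¹ := by field_simp; ring
    _ ≤ (log (1 + x))⁻¹ := inv_anti₀ hlog hbound

section LogOneAddRecursion

variable {d : ℕ → ℝ} (hrec : ∀ n, d (n + 1) = log (1 + d n)) (h0 : 0 < d 0)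
include hrec h0

theorem pos_of_eq_log_one_add (n : ℕ) : 0 < d n := by
  induction n with
  | zero => exact h0
  | succ n ih => rw [hrec]; exact log_pos (by linarith)

theorem antitone_of_eq_log_one_add : Antitone d := by
  refine antitone_nat_of_succ_le fun n => ?_
  have hpos := pos_of_eq_log_one_add hrec h0 n
  rw [hrec]
  linarith [log_le_sub_one_of_pos (show 0 < 1 + d n by linarith)]

theorem nat_div_le_inv_of_eq_log_one_add (n : ℕ) : n / (d 0 + 2) ≤ (d n)⁻¹ := by
  induction n with
  | zero => simp [(pos_of_eq_log_one_add hrec h0 0).le]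
  | succ n ih =>
    have hpos := pos_of_eq_log_one_add hrec h0 n
    have hstep : (d 0 + 2)⁻¹ ≤ (d n + 2)⁻¹ :=
      inv_anti₀ (by linarith) (by linarith [antitone_of_eq_log_one_add hrec h0 n.zero_le])
    calc ((n + 1 : ℕ) : ℝ) / (d 0 + 2) = n / (d 0 + 2) + (d 0 + 2)⁻¹ := by push_cast; ring
      _ ≤ (d n)⁻¹ + (d n + 2)⁻¹ := add_le_add ih hstep
      _ ≤ (d (n + 1))⁻¹ := hrec n ▸ inv_add_inv_add_two_le_inv_log_one_add hpos

theorem le_div_nat_of_eq_log_one_add {n : ℕ} (hn : 0 < n) : d n ≤ (d 0 + 2) / n := by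
  have hpos := pos_of_eq_log_one_add hrec h0 n
  have hquot : 0 < (n : ℝ) / (d 0 + 2) := by positivity
  calc d n = ((d n)⁻¹)⁻¹ := (inv_inv _).symm
    _ ≤ (n / (d 0 + 2))⁻¹ := inv_anti₀ hquot (nat_div_le_inv_of_eq_log_one_add hrec h0 n)
    _ = (d 0 + 2) / n := inv_div _ _

end LogOneAddRecursion

theorem iterated_log_seq_one_add_c_div_n (r : ℕ → ℝ)
    (h0 : 1 < r 0)
    (hrec : ∀ i : ℕ, r (i + 1) = 1 + Real.log (r i)) :
    ∃ c : ℝ, 0 < c ∧ ∃ N : ℕ, ∀ n : ℕ, N ≤ n → r n ≤ 1 + c / n := by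
  have hrec' : ∀ n, r (n + 1) - 1 = log (1 + (r n - 1)) := fun n => by
    rw [hrec]; ring_nf
  refine ⟨r 0 + 1, by linarith, 1, fun n hn => ?_⟩
  have hd := le_div_nat_of_eq_log_one_add (d := fun n => r n - 1) hrec' (by linarith) hn
  rw [show r 0 - 1 + 2 = r 0 + 1 by ring] at hd
  linarith
end

section
/- Fix N ≥ 1 and γ > 0. Suppose r_0, r_1, …, r_N satisfy r_i = 1 + ln(r_{i-1}) for 1 ≤ i ≤ N, and ∏_{n=0}^{N} r_n = 2γ + 1. Define q_{-1} = 0 and q_n = (∏_{i=0}^{n} r_i)/γ − 1/γ for 0 ≤ n ≤ N, and assume r_i > 1 for all i. Then q_N = 2, the sequence (q_n) is strictly increasing, and for every 0 ≤ n ≤ N−1 the levels satisfy (q_n + γ⁻¹) ln((q_n + γ⁻¹)/(q_{n-1} + γ⁻¹)) = q_{n+1} − q_n. -/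
/-!
Shifting the levels by `γ⁻¹` turns them into partial products: `q n + γ⁻¹ = (r 0 ⋯ r n) / γ`,
also for `n = -1` (empty product). Consecutive shifted levels therefore have ratio `r n > 1`,
and `log (r n) = r (n + 1) - 1` makes `(q n + γ⁻¹) * log (r n)` telescope to `q (n + 1) - q n`.
-/

open Finset Real

section PartialProducts

variable {r : ℕ → ℝ}

theorem prod_range_pos_of_one_lt {m : ℕ} (hr : ∀ i < m, 1 < r i) : 0 < ∏ i ∈ range m, r i :=
  prod_pos fun i hi => one_pos.trans (hr i (mem_range.1 hi))

theorem prod_range_lt_prod_range_succ {m : ℕ} (hr : ∀ i ≤ m, 1 < r i) :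
    ∏ i ∈ range m, r i < ∏ i ∈ range (m + 1), r i := by
  rw [prod_range_succ]
  exact lt_mul_of_one_lt_right
    (prod_range_pos_of_one_lt fun i hi => hr i hi.le) (hr m le_rfl)

theorem prod_range_succ_mul_log_div {k : ℕ} (hrec : r (k + 1) = 1 + log (r k))
    (hP : ∏ i ∈ range k, r i ≠ 0) :
    (∏ i ∈ range (k + 1), r i) * log ((∏ i ∈ range (k + 1), r i) / ∏ i ∈ range k, r i) =
      ∏ i ∈ range (k + 2), r i - ∏ i ∈ range (k + 1), r i := by
  have hratio : (∏ i ∈ range (k + 1), r i) / ∏ i ∈ range k, r i = r k := by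
    rw [prod_range_succ, mul_div_cancel_left₀ _ hP]
  rw [hratio, show log (r k) = r (k + 1) - 1 by linarith, prod_range_succ _ (k + 1)]
  ring

end PartialProducts

theorem quantizer_level_add_inv {N : ℕ} {γ : ℝ} {r : ℕ → ℝ} {q : ℤ → ℝ} (hqm1 : q (-1) = 0)
    (hq : ∀ n : ℤ, 0 ≤ n → n ≤ (N : ℤ) →
      q n = (∏ i ∈ range (n.toNat + 1), r i) / γ - 1 / γ)
    {k : ℕ} (hk : k ≤ N + 1) :
    q (k - 1) + γ⁻¹ = (∏ i ∈ range k, r i) / γ := by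
  cases k with
  | zero => simp [hqm1]
  | succ j =>
    have hj := hq j (Int.natCast_nonneg j) (by omega)
    rw [Int.toNat_natCast] at hj
    push_cast
    rw [add_sub_cancel_right, hj]
    ring

theorem uniform_quantizer_structure_general (N : ℕ) (γ : ℝ) (hγ : 0 < γ)
    (r : ℕ → ℝ)
    (hrec : ∀ i : ℕ, 1 ≤ i → i ≤ N → r i = 1 + Real.log (r (i - 1)))
    (hprod : ∏ n ∈ Finset.range (N + 1), r n = 2 * γ + 1)
    (hr : ∀ i : ℕ, i ≤ N → 1 < r i)
    (q : ℤ → ℝ) (hqm1 : q (-1) = 0)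
    (hq : ∀ n : ℤ, 0 ≤ n → n ≤ (N : ℤ) →
      q n = (∏ i ∈ Finset.range (n.toNat + 1), r i) / γ - 1 / γ) :
    q (N : ℤ) = 2 ∧
    (∀ n : ℤ, -1 ≤ n → n < (N : ℤ) → q n < q (n + 1)) ∧
    (∀ n : ℤ, 0 ≤ n → n ≤ (N : ℤ) - 1 →
      (q n + γ⁻¹) * Real.log ((q n + γ⁻¹) / (q (n - 1) + γ⁻¹)) =
        q (n + 1) - q n) := by
  have hlevel {k : ℕ} (hk : k ≤ N + 1) := quantizer_level_add_inv hqm1 hq hk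
  have hlevel_succ {k : ℕ} (hk : k ≤ N) : q k + γ⁻¹ = (∏ i ∈ range (k + 1), r i) / γ := by
    simpa using hlevel (k := k + 1) (by omega)
  refine ⟨?_, ?_, ?_⟩
  · have h := hlevel_succ le_rfl
    rw [hprod, add_div, mul_div_cancel_right₀ _ hγ.ne', one_div] at h
    linarith
  · intro n hn hnN
    obtain ⟨k, rfl⟩ : ∃ k : ℕ, n = k - 1 := ⟨(n + 1).toNat, by omega⟩
    rw [sub_add_cancel, ← add_lt_add_iff_right γ⁻¹, hlevel (by omega), hlevel_succ (by omega)]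
    exact div_lt_div_of_pos_right (prod_range_lt_prod_range_succ fun i hi => hr i (by omega)) hγ
  · intro n hn hnN
    obtain ⟨k, rfl⟩ := Int.eq_ofNat_of_zero_le hn
    have hP : ∏ i ∈ range k, r i ≠ 0 :=
      (prod_range_pos_of_one_lt fun i hi => hr i (by omega)).ne'
    have hnext : q ((k : ℤ) + 1) + γ⁻¹ = (∏ i ∈ range (k + 2), r i) / γ := by
      exact_mod_cast hlevel_succ (k := k + 1) (by omega)
    rw [← add_sub_add_right_eq_sub _ _ γ⁻¹, hnext, hlevel_succ (by omega), hlevel (by omega),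
      div_div_div_cancel_right₀ hγ.ne', div_mul_eq_mul_div,
      prod_range_succ_mul_log_div (by simpa using hrec (k + 1) (by omega) (by omega)) hP, sub_div]

theorem uniform_quantizer_structure (N : ℕ) (hN : 1 ≤ N) (γ : ℝ) (hγ : 0 < γ)
    (r : ℕ → ℝ)
    (hrec : ∀ i : ℕ, 1 ≤ i → i ≤ N → r i = 1 + Real.log (r (i - 1)))
    (hprod : ∏ n ∈ Finset.range (N + 1), r n = 2 * γ + 1)
    (hr : ∀ i : ℕ, i ≤ N → 1 < r i)
    (q : ℤ → ℝ) (hqm1 : q (-1) = 0)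
    (hq : ∀ n : ℤ, 0 ≤ n → n ≤ (N : ℤ) →
      q n = (∏ i ∈ Finset.range (n.toNat + 1), r i) / γ - 1 / γ) :
    q (N : ℤ) = 2 ∧
    (∀ n : ℤ, -1 ≤ n → n < (N : ℤ) → q n < q (n + 1)) ∧
    (∀ n : ℤ, 0 ≤ n → n ≤ (N : ℤ) - 1 →
      (q n + γ⁻¹) * Real.log ((q n + γ⁻¹) / (q (n - 1) + γ⁻¹)) =
        q (n + 1) - q n) :=
  uniform_quantizer_structure_general N γ hγ r hrec hprod hr q hqm1 hq
end

section
/- Let f : [0,∞) → [0,∞) be a continuous probability density with cdf F, let γ > 0, and let 0 = q_{-1} < q_0 < … < q_N be quantization boundaries. Define δ(q) = Σ_{n=-1}^{N-1} ∫_{q_n}^{q_{n+1}} ln((h + γ⁻¹)/(q_n + γ⁻¹)) f(h) dh. If q is an interior minimizer of δ (so the partial derivative with respect to each q_n, 0 ≤ n ≤ N−1, vanishes) and f(q_n) > 0, then for 0 ≤ n ≤ N−1: (q_n + γ⁻¹) ln((q_n + γ⁻¹)/(q_{n-1} + γ⁻¹)) = (F(q_{n+1}) − F(q_n))/f(q_n).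 -/
open MeasureTheory intervalIntegral

/-- Stationarity condition for the optimal quantizer: if the derivative of the part of the
quantization loss depending on `q n` vanishes at `q n` (interior minimizer), then consecutive
optimal quantization levels satisfy the fundamental iterative relation. -/
theorem optimal_quantizer_stationarity (N : ℕ) (hN : 1 ≤ N) (γ : ℝ) (hγ : 0 < γ)
    (f : ℝ → ℝ) (hf_cont : Continuous f) (hf_nonneg : ∀ x, 0 ≤ f x)
    (F : ℝ → ℝ) (hF : ∀ x : ℝ, F x = ∫ t in (0:ℝ)..x, f t)
    (q : ℤ → ℝ) (hqm1 : q (-1) = 0)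
    (hmono : ∀ m n : ℤ, -1 ≤ m → m < n → n ≤ (N : ℤ) → q m < q n)
    (hstat : ∀ n : ℤ, 0 ≤ n → n ≤ (N : ℤ) - 1 →
      HasDerivAt (fun x : ℝ =>
        (∫ h in (q (n - 1))..x,
            Real.log ((h + γ⁻¹) / (q (n - 1) + γ⁻¹)) * f h) +
        ∫ h in x..(q (n + 1)),
            Real.log ((h + γ⁻¹) / (x + γ⁻¹)) * f h) 0 (q n))
    (hfq : ∀ n : ℤ, 0 ≤ n → n ≤ (N : ℤ) - 1 → 0 < f (q n)) :
    ∀ n : ℤ, 0 ≤ n → n ≤ (N : ℤ) - 1 →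
      (q n + γ⁻¹) * Real.log ((q n + γ⁻¹) / (q (n - 1) + γ⁻¹)) =
        (F (q (n + 1)) - F (q n)) / f (q n) := by
  intro n hn0 hn1
  set c : ℝ := γ⁻¹ with hc_def
  have hc : 0 < c := inv_pos.mpr hγ
  set a : ℝ := q (n - 1) with ha_def
  set p : ℝ := q n with hp_def
  set b : ℝ := q (n + 1) with hb_def
  have ha0 : 0 ≤ a := by
    rcases eq_or_lt_of_le (show (-1 : ℤ) ≤ n - 1 by omega) with h | h
    · rw [ha_def, ← h, hqm1]
    · have := hmono (-1) (n - 1) le_rfl h (by omega)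
      rw [hqm1] at this; exact this.le
  have hap : a < p := hmono (n - 1) n (by omega) (by omega) (by omega)
  have hpb : p < b := hmono n (n + 1) (by omega) (by omega) (by omega)
  have hac : 0 < a + c := by linarith
  have hpc : 0 < p + c := by linarith
  have hbc : 0 < b + c := by linarith
  have hopen : IsOpen {x : ℝ | -c < x} := isOpen_lt continuous_const continuous_id
  have hmemp : p ∈ {x : ℝ | -c < x} := by simp only [Set.mem_setOf_eq]; linarith
  -- continuity of the integrands on the open set
  have hg1cont : ∀ x ∈ {x : ℝ | -c < x},
      ContinuousAt (fun h : ℝ => Real.log ((h + c) / (a + c)) * f h) x := by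
    intro x hx
    have hxc : 0 < x + c := by simpa [neg_lt_iff_pos_add, add_comm] using hx
    refine ContinuousAt.mul (ContinuousAt.log ?_ ?_) hf_cont.continuousAt
    · exact (continuousAt_id.add continuousAt_const).div continuousAt_const hac.ne'
    · exact (div_pos hxc hac).ne'
  have hg2cont : ∀ x ∈ {x : ℝ | -c < x},
      ContinuousAt (fun h : ℝ => Real.log (h + c) * f h) x := by
    intro x hx
    have hxc : 0 < x + c := by simpa [neg_lt_iff_pos_add, add_comm] using hx
    exact ContinuousAt.mul (ContinuousAt.log (continuousAt_id.add continuousAt_const)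
      hxc.ne') hf_cont.continuousAt
  -- derivative of the first term
  have hD1 : HasDerivAt (fun x : ℝ => ∫ h in a..x, Real.log ((h + c) / (a + c)) * f h)
      (Real.log ((p + c) / (a + c)) * f p) p := by
    refine integral_hasDerivAt_right ?_
      (ContinuousAt.stronglyMeasurableAtFilter hopen hg1cont p hmemp) (hg1cont p hmemp)
    apply ContinuousOn.intervalIntegrable
    intro h hh
    have h1 : min a p ≤ h := hh.1
    have : -c < h := by
      have : (0:ℝ) ≤ min a p := le_min ha0 (by linarith)
      linarith
    exact (hg1cont h this).continuousWithinAt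
  -- auxiliary derivatives for the second term
  have hA : HasDerivAt (fun x : ℝ => ∫ h in x..b, Real.log (h + c) * f h)
      (-(Real.log (p + c) * f p)) p := by
    refine integral_hasDerivAt_left ?_
      (ContinuousAt.stronglyMeasurableAtFilter hopen hg2cont p hmemp) (hg2cont p hmemp)
    apply ContinuousOn.intervalIntegrable
    intro h hh
    have h1 : min p b ≤ h := hh.1
    have : -c < h := by
      have : -c < min p b := lt_min (by linarith) (by linarith)
      linarith
    exact (hg2cont h this).continuousWithinAt
  have hB : HasDerivAt (fun x : ℝ => ∫ h in x..b, f h) (-f p) p :=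
    integral_hasDerivAt_left (hf_cont.intervalIntegrable _ _)
      (hf_cont.stronglyMeasurableAtFilter _ _) hf_cont.continuousAt
  have hL : HasDerivAt (fun x : ℝ => Real.log (x + c)) (1 / (p + c)) p := by
    have := ((hasDerivAt_id p).add_const c).log hpc.ne'
    simpa using this
  have hG : HasDerivAt (fun x : ℝ => (∫ h in x..b, Real.log (h + c) * f h)
      - Real.log (x + c) * ∫ h in x..b, f h)
      (-(Real.log (p + c) * f p) -
        (1 / (p + c) * (∫ h in p..b, f h) + Real.log (p + c) * (-f p))) p :=
    hA.sub (hL.mul hB)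
  -- the second term eventually equals the auxiliary expression
  have hev : (fun x : ℝ => ∫ h in x..b, Real.log ((h + c) / (x + c)) * f h)
      =ᶠ[nhds p] fun x => (∫ h in x..b, Real.log (h + c) * f h)
        - Real.log (x + c) * ∫ h in x..b, f h := by
    filter_upwards [hopen.mem_nhds hmemp] with x hx
    have hxc : 0 < x + c := by simpa [neg_lt_iff_pos_add, add_comm] using hx
    have hmin : -c < min x b := lt_min (by linarith) (by linarith)
    have key : Set.EqOn (fun h => Real.log ((h + c) / (x + c)) * f h)
        (fun h => Real.log (h + c) * f h - Real.log (x + c) * f h) (Set.uIcc x b) := by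
      intro h hh
      have h1 : min x b ≤ h := hh.1
      have hhc : 0 < h + c := by linarith
      simp only
      rw [Real.log_div hhc.ne' hxc.ne', sub_mul]
    have hint1 : IntervalIntegrable (fun h : ℝ => Real.log (h + c) * f h) volume x b := by
      apply ContinuousOn.intervalIntegrable
      intro h hh
      have h1 : min x b ≤ h := hh.1
      exact (hg2cont h (show -c < h by linarith)).continuousWithinAt
    have hint2 : IntervalIntegrable (fun h : ℝ => Real.log (x + c) * f h) volume x b :=
      (continuous_const.mul hf_cont).intervalIntegrable _ _
    rw [intervalIntegral.integral_congr key, intervalIntegral.integral_sub hint1 hint2,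
      intervalIntegral.integral_const_mul]
  have hD2 : HasDerivAt (fun x : ℝ => ∫ h in x..b, Real.log ((h + c) / (x + c)) * f h)
      (-(Real.log (p + c) * f p) -
        (1 / (p + c) * (∫ h in p..b, f h) + Real.log (p + c) * (-f p))) p :=
    hG.congr_of_eventuallyEq hev
  -- uniqueness of the derivative
  have heq := (hstat n hn0 hn1).unique (hD1.add hD2)
  -- F difference as an interval integral
  have hFB : F b - F p = ∫ h in p..b, f h := by
    rw [hF, hF]
    exact intervalIntegral.integral_interval_sub_left (hf_cont.intervalIntegrable 0 b)
      (hf_cont.intervalIntegrable 0 p)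
  have hfp := hfq n hn0 hn1
  rw [hFB]
  have hne : f p ≠ 0 := hfp.ne'
  field_simp at heq ⊢
  nlinarith [heq, hpc, hfp]
end

section
/- Let P_1, …, P_{N_S} ≥ 0 and P_{RD} ≥ 0 satisfy Σ_i P_i ≤ P_{RD}, and let q ∈ [0, P_{RD}]. Then (1/N_S) Σ_{i=1}^{N_S} ln((1 + P_i)/(1 + (q/P_{RD}) P_i)) ≤ ln((1 + P_{RD}/N_S)/(1 + q/N_S)). -/
/-!
Write `l = q / P_RD ∈ [0, 1]` and `f x = log (1 + x) - log (1 + l x)`. Its derivative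
`(1 - l) / ((1 + x) (1 + l x))` is nonnegative and antitone on `x ≥ 0`, so `f` is increasing and
concave there. Jensen's inequality bounds the average of the `f (P i)` by `f` of the average power,
which is at most `f (P_RD / N_S)`, and `l P_RD / N_S = q / N_S`.
-/

open Real Set Finset

theorem ConcaveOn.mean_le_map_mean {ι : Type*} [Fintype ι] [Nonempty ι] {s : Set ℝ}
    {f : ℝ → ℝ} (hf : ConcaveOn ℝ s f) {p : ι → ℝ} (hp : ∀ i, p i ∈ s) :
    1 / (Fintype.card ι : ℝ) * ∑ i, f (p i) ≤ f (1 / (Fintype.card ι : ℝ) * ∑ i, p i) := by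
  have hcard : (0 : ℝ) < Fintype.card ι := by exact_mod_cast Fintype.card_pos
  simpa only [mul_sum, smul_eq_mul] using
    hf.le_map_sum (t := univ) (w := fun _ ↦ 1 / (Fintype.card ι : ℝ))
      (fun _ _ ↦ by positivity) (by simp [card_univ, hcard.ne']) (fun i _ ↦ hp i)

noncomputable def rateLoss (l x : ℝ) : ℝ := log (1 + x) - log (1 + l * x)

section rateLoss

variable {l x : ℝ}

theorem rateLoss_eq_log_div (hl : 0 ≤ l) (hx : 0 ≤ x) :
    rateLoss l x = log ((1 + x) / (1 + l * x)) := by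
  rw [rateLoss, log_div (by positivity) (by positivity)]

theorem hasDerivAt_rateLoss (hl : 0 ≤ l) (hx : 0 ≤ x) :
    HasDerivAt (rateLoss l) ((1 - l) / ((1 + x) * (1 + l * x))) x := by
  have h₁ : HasDerivAt (fun x ↦ 1 + x) 1 x := (hasDerivAt_id x).const_add 1
  have h₂ : HasDerivAt (fun x ↦ 1 + l * x) l x := by
    simpa using ((hasDerivAt_id x).const_mul l).const_add 1
  refine ((h₁.log (by positivity)).sub (h₂.log (by positivity))).congr_deriv ?_
  field_simp
  ring

theorem monotoneOn_rateLoss (hl0 : 0 ≤ l) (hl1 : l ≤ 1) : MonotoneOn (rateLoss l) (Ici 0) := by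
  refine monotoneOn_of_hasDerivWithinAt_nonneg (convex_Ici 0)
    (continuousOn_of_forall_continuousAt fun x hx ↦ (hasDerivAt_rateLoss hl0 hx).continuousAt)
    (fun x hx ↦ (hasDerivAt_rateLoss hl0 (interior_subset hx)).hasDerivWithinAt) ?_
  intro x hx
  have hx₀ : 0 ≤ x := interior_subset hx
  have : 0 ≤ 1 - l := by linarith
  positivity

theorem concaveOn_rateLoss (hl0 : 0 ≤ l) (hl1 : l ≤ 1) : ConcaveOn ℝ (Ici 0) (rateLoss l) := by
  have hderiv : ∀ x ∈ interior (Ici (0 : ℝ)),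
      deriv (rateLoss l) x = (1 - l) / ((1 + x) * (1 + l * x)) :=
    fun x hx ↦ (hasDerivAt_rateLoss hl0 (interior_subset hx)).deriv
  refine AntitoneOn.concaveOn_of_deriv (convex_Ici 0)
    (continuousOn_of_forall_continuousAt fun x hx ↦ (hasDerivAt_rateLoss hl0 hx).continuousAt)
    (fun x hx ↦ (hasDerivAt_rateLoss hl0 (interior_subset hx)).differentiableAt
      |>.differentiableWithinAt) ?_
  intro x hx y hy hxy
  have hy₀ : 0 ≤ y := interior_subset hy
  have hx₀ : 0 ≤ x := interior_subset hx
  rw [hderiv x hx, hderiv y hy]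
  have : 0 ≤ 1 - l := by linarith
  gcongr

end rateLoss

theorem jensen_rate_loss_bound (Ns : ℕ) (hNs : 0 < Ns)
    (P : Fin Ns → ℝ) (hP : ∀ i, 0 ≤ P i)
    (PRD : ℝ) (hPRD : 0 < PRD)
    (hsum : ∑ i, P i ≤ PRD)
    (q : ℝ) (hq0 : 0 ≤ q) (hq1 : q ≤ PRD) :
    (1 / (Ns : ℝ)) * ∑ i, Real.log ((1 + P i) / (1 + (q / PRD) * P i)) ≤
      Real.log ((1 + PRD / Ns) / (1 + q / Ns)) := by
  have hl0 : 0 ≤ q / PRD := div_nonneg hq0 hPRD.le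
  have hl1 : q / PRD ≤ 1 := div_le_one_of_le₀ hq1 hPRD.le
  have : Nonempty (Fin Ns) := Fin.pos_iff_nonempty.mp hNs
  have hmean_nonneg : 0 ≤ 1 / (Ns : ℝ) * ∑ i, P i := by
    have hsum_nonneg : 0 ≤ ∑ i, P i := Finset.sum_nonneg fun i _ ↦ hP i
    positivity
  have hmean_le : 1 / (Ns : ℝ) * ∑ i, P i ≤ PRD / Ns := by
    rw [one_div_mul_eq_div]
    gcongr
  calc 1 / (Ns : ℝ) * ∑ i, log ((1 + P i) / (1 + q / PRD * P i))
      = 1 / (Fintype.card (Fin Ns) : ℝ) * ∑ i, rateLoss (q / PRD) (P i) := by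
        simp only [Fintype.card_fin, rateLoss_eq_log_div hl0 (hP _)]
    _ ≤ rateLoss (q / PRD) (1 / (Fintype.card (Fin Ns) : ℝ) * ∑ i, P i) :=
        (concaveOn_rateLoss hl0 hl1).mean_le_map_mean hP
    _ ≤ rateLoss (q / PRD) (PRD / Ns) := by
        rw [Fintype.card_fin]
        exact monotoneOn_rateLoss hl0 hl1 hmean_nonneg (hmean_nonneg.trans hmean_le) hmean_le
    _ = log ((1 + PRD / Ns) / (1 + q / Ns)) := by
        rw [rateLoss_eq_log_div hl0 (hmean_nonneg.trans hmean_le), div_mul_div_cancel₀ hPRD.ne']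
end

section
/- Consider rates R_i(P_i) = min(C(a_i), C(P_i)) where C(p) = ln(1+p), a_i ≥ 0 are fixed, and the power vector (P_1,…,P_{N_S}) maximizes Σ_i R_i(P_i) subject to P_i ≥ 0 and Σ_i P_i ≤ P̄. If there exists an index i with P_i* < a_i at an optimal solution (P_1*,…,P_{N_S}*), then Σ_j a_j ≥ Σ_j P_j*. -/
theorem relay_power_allocation_lemma (Ns : ℕ) (hNs : 0 < Ns)
    (a : Fin Ns → ℝ) (ha : ∀ i, 0 ≤ a i)
    (Pbar : ℝ) (hPbar : 0 ≤ Pbar)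
    (Pstar : Fin Ns → ℝ) (hPstar : ∀ i, 0 ≤ Pstar i)
    (hfeas : ∑ i, Pstar i ≤ Pbar)
    (hopt : ∀ P : Fin Ns → ℝ, (∀ i, 0 ≤ P i) → ∑ i, P i ≤ Pbar →
      ∑ i, min (Real.log (1 + a i)) (Real.log (1 + P i)) ≤
      ∑ i, min (Real.log (1 + a i)) (Real.log (1 + Pstar i)))
    (hex : ∃ i, Pstar i < a i) :
    ∑ i, Pstar i ≤ ∑ i, a i := by
  by_contra hcon
  push_neg at hcon
  obtain ⟨i, hi⟩ := hex
  -- there is j with a j < Pstar j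
  have hj : ∃ j, a j < Pstar j := by
    by_contra h
    push_neg at h
    exact absurd (Finset.sum_le_sum (fun k _ => h k)) (not_le.mpr hcon)
  obtain ⟨j, hj⟩ := hj
  have hij : i ≠ j := by
    intro h; rw [h] at hi; linarith
  set ε : ℝ := min (a i - Pstar i) (Pstar j - a j) with hε
  have hεpos : 0 < ε := lt_min (by linarith) (by linarith)
  have hε1 : Pstar i + ε ≤ a i := by
    have := min_le_left (a i - Pstar i) (Pstar j - a j); linarith
  have hε2 : a j ≤ Pstar j - ε := by
    have := min_le_right (a i - Pstar i) (Pstar j - a j); linarith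
  set P : Fin Ns → ℝ := fun k => if k = i then Pstar i + ε else if k = j then Pstar j - ε else Pstar k with hP
  have hPi : P i = Pstar i + ε := by simp [hP]
  have hPj : P j = Pstar j - ε := by simp [hP, hij.symm]
  have hPk : ∀ k, k ≠ i → k ≠ j → P k = Pstar k := by
    intro k h1 h2; simp [hP, h1, h2]
  have hsum : ∑ k, P k = ∑ k, Pstar k := by
    have key : ∑ k, (P k - Pstar k) = 0 := by
      rw [← Finset.sum_subset (Finset.subset_univ ({i, j} : Finset (Fin Ns)))
        (by intro k _ hk
            simp only [Finset.mem_insert, Finset.mem_singleton] at hk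
            push_neg at hk
            rw [hPk k hk.1 hk.2]; ring)]
      rw [Finset.sum_pair hij, hPi, hPj]; ring
    rw [Finset.sum_sub_distrib] at key
    linarith
  have hPnn : ∀ k, 0 ≤ P k := by
    intro k
    by_cases h1 : k = i
    · rw [h1, hPi]; linarith [hPstar i]
    by_cases h2 : k = j
    · rw [h2, hPj]; linarith [ha j]
    · rw [hPk k h1 h2]; exact hPstar k
  have hPfeas : ∑ k, P k ≤ Pbar := by rw [hsum]; exact hfeas
  have hopt' := hopt P hPnn hPfeas
  -- show strict improvement, contradiction
  set f : Fin Ns → ℝ → ℝ := fun k x => min (Real.log (1 + a k)) (Real.log (1 + x)) with hf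
  have key : ∑ k, (f k (P k) - f k (Pstar k)) > 0 := by
    have hsub : ∑ k, (f k (P k) - f k (Pstar k)) =
        ∑ k ∈ ({i, j} : Finset (Fin Ns)), (f k (P k) - f k (Pstar k)) := by
      rw [← Finset.sum_subset (Finset.subset_univ ({i, j} : Finset (Fin Ns)))
        (by intro k _ hk
            simp only [Finset.mem_insert, Finset.mem_singleton] at hk
            push_neg at hk
            rw [hPk k hk.1 hk.2]; ring)]
    rw [hsub, Finset.sum_pair hij]
    have hfi : f i (P i) - f i (Pstar i) > 0 := by
      have h1 : f i (P i) = Real.log (1 + (Pstar i + ε)) := by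
        rw [hf, hPi]
        exact min_eq_right (Real.log_le_log (by linarith [hPstar i]) (by linarith))
      have h2 : f i (Pstar i) = Real.log (1 + Pstar i) := by
        rw [hf]
        exact min_eq_right (Real.log_le_log (by linarith [hPstar i]) (by linarith))
      rw [h1, h2]
      have := Real.log_lt_log (x := 1 + Pstar i) (y := 1 + (Pstar i + ε)) (by linarith [hPstar i]) (by linarith)
      linarith
    have hfj : f j (P j) - f j (Pstar j) = 0 := by
      have h1 : f j (P j) = Real.log (1 + a j) := by
        rw [hf, hPj]
        exact min_eq_left (Real.log_le_log (by linarith [ha j]) (by linarith))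
      have h2 : f j (Pstar j) = Real.log (1 + a j) := by
        rw [hf]
        exact min_eq_left (Real.log_le_log (by linarith [ha j]) (by linarith))
      rw [h1, h2]; ring
    linarith
  rw [Finset.sum_sub_distrib] at key
  simp only [hf] at key
  linarith
end

section
/- Let r_0 = r_0(γ) > 1 be defined implicitly by ∏_{n=0}^{N} r_n = κγ + 1 for fixed N ≥ 1, κ > 0, where r_i = 1 + ln r_{i−1}. Then as γ → ∞: (a) r_n → ∞ for every 0 ≤ n ≤ N; (b) γ/r_n → ∞ for every n; and (c) r_{n+1}/r_n = (1 + ln r_n)/r_n → 0 for every n. -/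
/-!
Since `log x ≤ x - 1`, the iterates `r_n` decrease and stay above `1`. Hence
`κγ + 1 ≤ r_0 ^ (N + 1)` forces `r_0 → ∞`, and each `r_{n+1} = 1 + log r_n` follows.
Keeping only the first two factors of the product, `r_0 r_1 ≤ κγ + 1`, so
`γ / r_n ≥ γ / r_0 ≥ (r_1 - 1) / κ → ∞`.
-/

open Filter Real Finset

lemma tendsto_atTop_of_le_pow {α R : Type*} [Semiring R] [LinearOrder R] [IsStrictOrderedRing R]
    {l : Filter α} {f g : α → R} {k : ℕ} (hk : k ≠ 0) (hf : ∀ᶠ x in l, 0 ≤ f x)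
    (hg : Tendsto g l atTop) (hle : ∀ᶠ x in l, g x ≤ f x ^ k) : Tendsto f l atTop := by
  rw [tendsto_atTop]
  intro b
  filter_upwards [hf, hle, hg.eventually_ge_atTop (max b 0 ^ k)] with x hfx hgf hbg
  exact (le_max_left b 0).trans
    ((pow_le_pow_iff_left₀ (le_max_right b 0) hfx hk).1 (hbg.trans hgf))

lemma tendsto_one_add_log_div_atTop :
    Tendsto (fun x : ℝ => (1 + log x) / x) atTop (nhds 0) := by
  have h := tendsto_inv_atTop_zero.add isLittleO_log_id_atTop.tendsto_div_nhds_zero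
  rw [add_zero] at h
  refine h.congr' ?_
  filter_upwards [eventually_ne_atTop 0] with x hx
  simp only [id, add_div, one_div]

lemma tendsto_log_iterate_atTop {α : Type*} {l : Filter α} {r : α → ℕ → ℝ}
    (hrec : ∀ᶠ x in l, ∀ i, r x (i + 1) = 1 + log (r x i))
    (h0 : Tendsto (fun x => r x 0) l atTop) (n : ℕ) : Tendsto (fun x => r x n) l atTop := by
  induction n with
  | zero => exact h0
  | succ k ih =>
    refine (tendsto_atTop_add_const_left _ 1 (tendsto_log_atTop.comp ih)).congr' ?_
    filter_upwards [hrec] with x hx using (hx k).symm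

namespace LogIterate

variable {s : ℕ → ℝ} (h0 : 1 < s 0) (hrec : ∀ i, s (i + 1) = 1 + log (s i))
include h0 hrec

lemma one_lt (n : ℕ) : 1 < s n := by
  induction n with
  | zero => exact h0
  | succ k ih => rw [hrec k]; linarith [log_pos ih]

lemma pos (n : ℕ) : 0 < s n := zero_lt_one.trans (one_lt h0 hrec n)

lemma antitone : Antitone s :=
  antitone_nat_of_succ_le fun i => by
    rw [hrec i]; linarith [log_le_sub_one_of_pos (pos h0 hrec i)]

lemma prod_le_pow (N : ℕ) : ∏ n ∈ range (N + 1), s n ≤ s 0 ^ (N + 1) :=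
  calc ∏ n ∈ range (N + 1), s n ≤ ∏ _n ∈ range (N + 1), s 0 :=
        prod_le_prod (fun i _ => (pos h0 hrec i).le)
          fun i _ => antitone h0 hrec i.zero_le
    _ = s 0 ^ (N + 1) := by rw [prod_const, card_range]

lemma mul_le_prod {N : ℕ} (hN : 1 ≤ N) : s 0 * s 1 ≤ ∏ n ∈ range (N + 1), s n := by
  have h := prod_le_prod_of_subset_of_one_le (f := s) (range_subset_range.2 (by omega : 2 ≤ N + 1))
    (fun i _ => (pos h0 hrec i).le) fun i _ _ => (one_lt h0 hrec i).le
  simpa [prod_range_succ] using h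

lemma sub_one_div_le_div {N : ℕ} (hN : 1 ≤ N) {κ γ : ℝ} (hκ : 0 < κ)
    (hprod : ∏ n ∈ range (N + 1), s n = κ * γ + 1) (n : ℕ) : (s 1 - 1) / κ ≤ γ / s n := by
  have hs0 := one_lt h0 hrec 0
  have hmul : s 0 * s 1 ≤ κ * γ + 1 := hprod ▸ mul_le_prod h0 hrec hN
  have hγ : 0 ≤ γ := by nlinarith [one_lt h0 hrec 1]
  calc (s 1 - 1) / κ ≤ γ / s 0 := by
        rw [div_le_div_iff₀ hκ (pos h0 hrec 0)]; nlinarith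
    _ ≤ γ / s n := div_le_div_of_nonneg_left hγ (pos h0 hrec n) (antitone h0 hrec n.zero_le)

end LogIterate

theorem high_snr_ratio_properties (N : ℕ) (hN : 1 ≤ N) (κ : ℝ) (hκ : 0 < κ)
    (r : ℝ → ℕ → ℝ)
    (h0 : ∀ γ : ℝ, 0 < γ → 1 < r γ 0)
    (hrec : ∀ γ : ℝ, 0 < γ → ∀ i : ℕ, r γ (i + 1) = 1 + Real.log (r γ i))
    (hprod : ∀ γ : ℝ, 0 < γ → ∏ n ∈ Finset.range (N + 1), r γ n = κ * γ + 1) :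
    (∀ n ≤ N, Filter.Tendsto (fun γ => r γ n) Filter.atTop Filter.atTop) ∧
    (∀ n ≤ N, Filter.Tendsto (fun γ => γ / r γ n) Filter.atTop Filter.atTop) ∧
    (∀ n ≤ N, Filter.Tendsto (fun γ => (1 + Real.log (r γ n)) / r γ n)
      Filter.atTop (nhds 0)) := by
  have hpos : ∀ᶠ γ in atTop, (0 : ℝ) < γ := eventually_gt_atTop 0
  have hlin : Tendsto (fun γ : ℝ => κ * γ + 1) atTop atTop :=
    tendsto_atTop_add_const_right _ 1 (tendsto_id.const_mul_atTop hκ)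
  have ha0 : Tendsto (fun γ => r γ 0) atTop atTop := by
    refine tendsto_atTop_of_le_pow N.succ_ne_zero ?_ hlin ?_ <;>
      filter_upwards [hpos] with γ hγ
    · exact (zero_lt_one.trans (h0 γ hγ)).le
    · exact hprod γ hγ ▸ LogIterate.prod_le_pow (h0 γ hγ) (hrec γ hγ) N
  have ha := tendsto_log_iterate_atTop (hpos.mono hrec) ha0
  have hb1 : Tendsto (fun γ => (r γ 1 - 1) / κ) atTop atTop :=
    (tendsto_atTop_add_const_right _ (-1) (ha 1)).atTop_div_const hκ
  refine ⟨fun n _ => ha n, fun n _ => ?_, fun n _ => tendsto_one_add_log_div_atTop.comp (ha n)⟩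
  refine tendsto_atTop_mono' atTop ?_ hb1
  filter_upwards [hpos] with γ hγ
  exact LogIterate.sub_one_div_le_div (h0 γ hγ) (hrec γ hγ) hN hκ (hprod γ hγ) n
end
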